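/- If a Laurent polynomial identity κ̃ = Sym[ f(w_1,…,w_n) ∏_{a<b} ζ̃(w_a/w_b) ] holds over ℚ(q, t_1,…,t_g), then taking lowest-degree terms under the exponential substitution q = e^ħ, t_e = e^{u_e}, w_a = e^{z_a} yields the identity κ = Sym[ g(z_1,…,z_n) ∏_{a<b} ζ(z_a − z_b) ] in ℚ(ħ, u_1,…,u_g)[z_1,…,z_n], where κ is the lowest-degree term of κ̃ and g is the lowest-degree term of f, provided the symmetrization on the right-hand side does not vanish in lowest degree. In particular, for the multiplicative and additive structure functions ζ̃ and ζ of the g-loop quiver, the lowest-degree term of ζ̃(w_a/w_b) is ζ(z_a − z_b). -/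

import Mathlib

/- STATEMENT 9: If a Laurent polynomial identity
`κ̃ = Sym[ f(w_1,…,w_n) ∏_{a<b} ζ̃(w_a/w_b) ]` holds over `ℚ(q, t_1,…,t_g)`, then taking
lowest-degree terms under the exponential substitution `q = e^ħ, t_e = e^{u_e},
w_a = e^{z_a}` yields the identity `κ = Sym[ g(z_1,…,z_n) ∏_{a<b} ζ(z_a − z_b) ]` over
`ℚ(ħ, u_1,…,u_g)`, where `κ` is the lowest-degree term of `κ̃` and `g` the lowest-degree
term of `f`, provided the symmetrization on the right-hand side does not vanish in lowest
degree.  In particular, the lowest-degree term of `ζ̃(w_a/w_b)` is `ζ(z_a − z_b)`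
(interpreted after clearing denominators: `ζ̃(w_a/w_b) = Num/Den` with
`Num = (w_a − q w_b) ∏_e (w_a t_e − w_b)(w_a q − w_b t_e)` and
`Den = q (∏_e t_e) w_b^{2g} (w_a − w_b)`, and the lowest-degree terms of `Num`, `Den`
are the corresponding numerator `(z_a−z_b−ħ)∏_e(z_a−z_b+u_e)(z_a−z_b+ħ−u_e)` and
denominator `z_a − z_b` of `ζ`).

The coefficient field `FF g` is the rational function field in `g+1` generators over
`ℚ`, whose generators are read as `q, t_1, …, t_g` on the multiplicative side and as
`ħ, u_1, …, u_g` on the additive side; Laurent polynomials are represented by elements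
of the polynomial ring `Pall` in the variables `Fin (g+1) ⊕ Fin n`. -/

open MvPolynomial

noncomputable section

set_option synthInstance.maxHeartbeats 1000000
set_option maxHeartbeats 1000000

/-- The coefficient field `ℚ(q, t_1, …, t_g)` (equivalently `ℚ(ħ, u_1, …, u_g)`). -/
abbrev FF (g : ℕ) : Type := FractionRing (MvPolynomial (Fin (g+1)) ℚ)

/-- The generators: `gen g 0` is `q` (resp. `ħ`), `gen g e.succ` is `t_e` (resp. `u_e`). -/
def gen (g : ℕ) (i : Fin (g+1)) : FF g := algebraMap (MvPolynomial (Fin (g+1)) ℚ) (FF g) (X i)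

/-- The field of rational functions in `w_1,…,w_n` (resp. `z_1,…,z_n`) over `FF g`. -/
abbrev KK (g n : ℕ) : Type := FractionRing (MvPolynomial (Fin n) (FF g))

def ι (g n : ℕ) : MvPolynomial (Fin n) (FF g) →+* KK g n := algebraMap _ _
def vv (g n : ℕ) (a : Fin n) : KK g n := ι g n (X a)
def cK (g n : ℕ) (r : FF g) : KK g n := ι g n (C r)

/-- The field automorphism of `KK g n` permuting the `n` variables. -/
def permK (g n : ℕ) (σ : Equiv.Perm (Fin n)) : KK g n ≃+* KK g n :=
  IsFractionRing.ringEquivOfRingEquiv (renameEquiv (FF g) σ).toRingEquiv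

/-- `ζ̃(x) = ((x q⁻¹ − 1)/(x − 1)) ∏_e (x t_e − 1)(x q t_e⁻¹ − 1)`. -/
def zetaMul (g n : ℕ) (x : KK g n) : KK g n :=
  ((x * (cK g n (gen g 0))⁻¹ - 1) / (x - 1)) *
    ∏ e : Fin g, (x * cK g n (gen g e.succ) - 1) *
      (x * cK g n (gen g 0) * (cK g n (gen g e.succ))⁻¹ - 1)

/-- `ζ(y) = ((y − ħ)/y) ∏_e (y + u_e)(y + ħ − u_e)`. -/
def zetaAdd (g n : ℕ) (x : KK g n) : KK g n :=
  ((x - cK g n (gen g 0)) / x) *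
    ∏ e : Fin g, (x + cK g n (gen g e.succ)) * (x + cK g n (gen g 0) - cK g n (gen g e.succ))

/-- Polynomials in all the variables `q, t_e, w_a` (resp. `ħ, u_e, z_a`) over `ℚ`. -/
abbrev Pall (g n : ℕ) : Type := MvPolynomial (Fin (g+1) ⊕ Fin n) ℚ

/-- Interpreting an element of `Pall` inside the rational function field `KK g n`. -/
def liftK (g n : ℕ) : Pall g n →+* KK g n :=
  (ι g n).comp (MvPolynomial.aeval (R := ℚ)
    (Sum.elim (fun i => (C (gen g i) : MvPolynomial (Fin n) (FF g))) fun a => X a)).toRingHom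

/-- The formal power series `exp(X i)`. -/
def expVar {σ : Type*} [DecidableEq σ] (i : σ) : MvPowerSeries σ ℚ :=
  fun d => if d = Finsupp.single i (d i) then (1 : ℚ) / (d i).factorial else 0

/-- The exponential substitution `q ↦ e^ħ, t_e ↦ e^{u_e}, w_a ↦ e^{z_a}`. -/
def expSubst (g n : ℕ) : Pall g n →ₐ[ℚ] MvPowerSeries (Fin (g+1) ⊕ Fin n) ℚ :=
  MvPolynomial.aeval fun v => expVar v

def degOf {σ : Type*} (d : σ →₀ ℕ) : ℕ := d.sum fun _ k => k

def homComp {σ : Type*} (k : ℕ) (A : MvPowerSeries σ ℚ) : MvPowerSeries σ ℚ :=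
  fun d => if degOf d = k then A d else 0

def ordOf {σ : Type*} (A : MvPowerSeries σ ℚ) : ℕ := sInf {k | homComp k A ≠ 0}

/-- The lowest-degree homogeneous term of a formal power series. -/
def lowTerm {σ : Type*} (A : MvPowerSeries σ ℚ) : MvPowerSeries σ ℚ := homComp (ordOf A) A

/-- `Num` of `ζ̃(w_a/w_b)` after clearing denominators. -/
def zetaMulNum (g n : ℕ) (a b : Fin n) : Pall g n :=
  (X (Sum.inr a) - X (Sum.inl 0) * X (Sum.inr b)) *
    ∏ e : Fin g, (X (Sum.inr a) * X (Sum.inl e.succ) - X (Sum.inr b)) *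
      (X (Sum.inr a) * X (Sum.inl 0) - X (Sum.inr b) * X (Sum.inl e.succ))

/-- `Den` of `ζ̃(w_a/w_b)` after clearing denominators. -/
def zetaMulDen (g n : ℕ) (a b : Fin n) : Pall g n :=
  X (Sum.inl 0) * (∏ e : Fin g, X (Sum.inl e.succ)) * X (Sum.inr b) ^ (2*g) *
    (X (Sum.inr a) - X (Sum.inr b))

/-- The numerator `(z_a−z_b−ħ) ∏_e (z_a−z_b+u_e)(z_a−z_b+ħ−u_e)` of `ζ(z_a−z_b)`. -/
def zetaAddNum (g n : ℕ) (a b : Fin n) : Pall g n :=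
  (X (Sum.inr a) - X (Sum.inr b) - X (Sum.inl 0)) *
    ∏ e : Fin g, (X (Sum.inr a) - X (Sum.inr b) + X (Sum.inl e.succ)) *
      (X (Sum.inr a) - X (Sum.inr b) + X (Sum.inl 0) - X (Sum.inl e.succ))


/-! ### Auxiliary development -/

namespace StmtNine

section PowerSeriesLayer

variable {τ : Type*} [DecidableEq τ]

lemma coePoly_apply (p : MvPolynomial τ ℚ) (d : τ →₀ ℕ) :
    (↑p : MvPowerSeries τ ℚ) d = MvPolynomial.coeff d p :=
  (MvPowerSeries.coeff_apply (↑p : MvPowerSeries τ ℚ) d).symm.trans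
    (MvPolynomial.coeff_coe p d)

lemma zero_apply (d : τ →₀ ℕ) : (0 : MvPowerSeries τ ℚ) d = 0 := rfl

lemma homComp_zero (k : ℕ) : homComp k (0 : MvPowerSeries τ ℚ) = 0 := by
  funext d
  show (if degOf d = k then (0 : MvPowerSeries τ ℚ) d else 0) = (0 : MvPowerSeries τ ℚ) d
  rw [zero_apply]
  split <;> rfl

lemma coe_eq_zero_iff {p : MvPolynomial τ ℚ} :
    (↑p : MvPowerSeries τ ℚ) = 0 ↔ p = 0 := by
  constructor
  · intro h
    exact MvPolynomial.coe_inj.mp (by rw [h]; push_cast; rfl)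
  · rintro rfl; push_cast; rfl

lemma degOf_add (a b : τ →₀ ℕ) : degOf (a + b) = degOf a + degOf b :=
  Finsupp.sum_add_index' (fun _ => rfl) (fun _ _ _ => rfl)

lemma degOf_eq_zero {d : τ →₀ ℕ} : degOf d = 0 ↔ d = 0 := by
  constructor
  · intro h
    ext i
    by_cases hi : i ∈ d.support
    · exact (Finset.sum_eq_zero_iff.mp h i hi)
    · simpa using Finsupp.notMem_support_iff.mp hi
  · rintro rfl
    simp [degOf, Finsupp.sum_zero_index]

lemma homComp_apply (k : ℕ) (A : MvPowerSeries τ ℚ) (d : τ →₀ ℕ) :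
    homComp k A d = if degOf d = k then A d else 0 := rfl

lemma homComp_add (k : ℕ) (A B : MvPowerSeries τ ℚ) :
    homComp k (A + B) = homComp k A + homComp k B := by
  funext d
  show _ = homComp k A d + homComp k B d
  rw [homComp_apply, homComp_apply, homComp_apply]
  split_ifs with h
  · rfl
  · simp

lemma homComp_sum {ι : Type*} (s : Finset ι) (F : ι → MvPowerSeries τ ℚ) (k : ℕ) :
    homComp k (∑ i ∈ s, F i) = ∑ i ∈ s, homComp k (F i) := by
  classical
  induction s using Finset.induction_on with
  | empty => funext d; simp [homComp_apply]; intro h; rfl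
  | insert _ _ hx ih =>
      rw [Finset.sum_insert hx, Finset.sum_insert hx, homComp_add, ih]

lemma ordSet_nonempty {A : MvPowerSeries τ ℚ} (hA : A ≠ 0) :
    {k | homComp k A ≠ 0}.Nonempty := by
  have : ∃ d, A d ≠ 0 := by
    by_contra h
    push_neg at h
    exact hA (funext fun d => h d)
  obtain ⟨d, hd⟩ := this
  refine ⟨degOf d, fun h0 => hd ?_⟩
  have := congrFun h0 d
  simpa [homComp_apply, zero_apply] using this

lemma homComp_ordOf_ne_zero {A : MvPowerSeries τ ℚ} (hA : A ≠ 0) :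
    homComp (ordOf A) A ≠ 0 := Nat.sInf_mem (ordSet_nonempty hA)

lemma homComp_eq_zero_of_lt {A : MvPowerSeries τ ℚ} {k : ℕ} (h : k < ordOf A) :
    homComp k A = 0 := by
  by_contra h'
  exact absurd (Nat.sInf_le h') (not_le.2 h)

lemma apply_eq_zero_of_lt {A : MvPowerSeries τ ℚ} {d : τ →₀ ℕ} (h : degOf d < ordOf A) :
    A d = 0 := by
  have := congrFun (homComp_eq_zero_of_lt h) d
  simpa [homComp_apply, zero_apply] using this

lemma ordOf_eq_of {A : MvPowerSeries τ ℚ} {m : ℕ} (h1 : homComp m A ≠ 0)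
    (h2 : ∀ k < m, homComp k A = 0) : ordOf A = m := by
  refine le_antisymm (Nat.sInf_le h1) (le_csInf ⟨m, h1⟩ fun k hk => ?_)
  by_contra hk'
  push_neg at hk'
  exact hk (h2 k hk')

/-- `A` has lowest term in degree `m` equal to the polynomial `p`. -/
def LTS (A : MvPowerSeries τ ℚ) (m : ℕ) (p : MvPolynomial τ ℚ) : Prop :=
  (∀ k < m, homComp k A = 0) ∧ homComp m A = ↑p ∧ p ≠ 0

lemma LTS.ne_zero {A : MvPowerSeries τ ℚ} {m : ℕ} {p : MvPolynomial τ ℚ}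
    (h : LTS A m p) : A ≠ 0 := by
  rintro rfl
  obtain ⟨-, h2, h3⟩ := h
  rw [homComp_zero] at h2
  exact h3 (coe_eq_zero_iff.mp h2.symm)

lemma LTS.ordOf_eq {A : MvPowerSeries τ ℚ} {m : ℕ} {p : MvPolynomial τ ℚ}
    (h : LTS A m p) : ordOf A = m := by
  refine ordOf_eq_of (fun hz => h.2.2 ?_) h.1
  rw [h.2.1] at hz
  exact coe_eq_zero_iff.mp hz

lemma LTS.lowTerm_eq {A : MvPowerSeries τ ℚ} {m : ℕ} {p : MvPolynomial τ ℚ}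
    (h : LTS A m p) : lowTerm A = ↑p := by
  rw [lowTerm, h.ordOf_eq, h.2.1]

lemma LTS.coeff_eq_zero {A : MvPowerSeries τ ℚ} {m : ℕ} {p : MvPolynomial τ ℚ}
    (h : LTS A m p) {d : τ →₀ ℕ} (hd : degOf d ≠ m) : MvPolynomial.coeff d p = 0 := by
  have := congrFun h.2.1 d
  rw [homComp_apply, if_neg hd, coePoly_apply] at this
  exact this.symm

lemma LTS.coeff_eq {A : MvPowerSeries τ ℚ} {m : ℕ} {p : MvPolynomial τ ℚ}
    (h : LTS A m p) {d : τ →₀ ℕ} (hd : degOf d = m) : A d = MvPolynomial.coeff d p := by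
  have := congrFun h.2.1 d
  rwa [homComp_apply, if_pos hd, coePoly_apply] at this

lemma LTS.apply_eq_zero {A : MvPowerSeries τ ℚ} {m : ℕ} {p : MvPolynomial τ ℚ}
    (h : LTS A m p) {d : τ →₀ ℕ} (hd : degOf d < m) : A d = 0 := by
  have := congrFun (h.1 _ hd) d
  simpa [homComp_apply, zero_apply] using this

lemma mul_apply (A B : MvPowerSeries τ ℚ) (d : τ →₀ ℕ) :
    (A * B) d = ∑ x ∈ Finset.HasAntidiagonal.antidiagonal d, A x.1 * B x.2 := by
  rw [← MvPowerSeries.coeff_apply (A*B), MvPowerSeries.coeff_mul]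
  simp [MvPowerSeries.coeff_apply]

lemma LTS.mul {A B : MvPowerSeries τ ℚ} {ma mb : ℕ} {pa pb : MvPolynomial τ ℚ}
    (hA : LTS A ma pa) (hB : LTS B mb pb) : LTS (A * B) (ma + mb) (pa * pb) := by
  refine ⟨?_, ?_, mul_ne_zero hA.2.2 hB.2.2⟩
  · intro k hk
    funext d
    rw [homComp_apply]
    split_ifs with hd
    swap; · rfl
    rw [mul_apply]
    apply Finset.sum_eq_zero
    intro x hx
    have hxd : degOf x.1 + degOf x.2 = k := by
      rw [← degOf_add, Finset.HasAntidiagonal.mem_antidiagonal.mp hx, hd]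
    rcases (by omega : degOf x.1 < ma ∨ degOf x.2 < mb) with h | h
    · rw [hA.apply_eq_zero h, zero_mul]
    · rw [hB.apply_eq_zero h, mul_zero]
  · funext d
    rw [homComp_apply, coePoly_apply, MvPolynomial.coeff_mul]
    split_ifs with hd
    · rw [mul_apply]
      apply Finset.sum_congr rfl
      intro x hx
      have hxd : degOf x.1 + degOf x.2 = ma + mb := by
        rw [← degOf_add, Finset.HasAntidiagonal.mem_antidiagonal.mp hx, hd]
      rcases lt_trichotomy (degOf x.1) ma with h | h | h
      · rw [hA.apply_eq_zero h, hA.coeff_eq_zero (by omega), zero_mul, zero_mul]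
      · rw [hA.coeff_eq h, hB.coeff_eq (by omega)]
      · rw [hB.apply_eq_zero (by omega), hB.coeff_eq_zero (by omega), mul_zero, mul_zero]
    · symm
      apply Finset.sum_eq_zero
      intro x hx
      have hxd : degOf x.1 + degOf x.2 = degOf d := by
        rw [← degOf_add, Finset.HasAntidiagonal.mem_antidiagonal.mp hx]
      by_cases h1 : degOf x.1 = ma
      · rw [hB.coeff_eq_zero (by omega), mul_zero]
      · rw [hA.coeff_eq_zero h1, zero_mul]

lemma LTS.one : LTS (1 : MvPowerSeries τ ℚ) 0 1 := by
  refine ⟨fun k hk => absurd hk (Nat.not_lt_zero k), ?_, one_ne_zero⟩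
  funext d
  rw [homComp_apply, coePoly_apply]
  by_cases hd : d = 0
  · subst hd
    rw [if_pos (degOf_eq_zero.mpr rfl)]
    simp [← MvPowerSeries.coeff_apply, MvPowerSeries.coeff_one]
  · rw [if_neg (fun h => hd (degOf_eq_zero.mp h))]
    simp [MvPolynomial.coeff_one, hd, Ne.symm hd]

lemma LTS.prod {ι : Type*} (s : Finset ι) (F : ι → MvPowerSeries τ ℚ)
    (mf : ι → ℕ) (pf : ι → MvPolynomial τ ℚ) (h : ∀ i ∈ s, LTS (F i) (mf i) (pf i)) :
    LTS (∏ i ∈ s, F i) (∑ i ∈ s, mf i) (∏ i ∈ s, pf i) := by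
  classical
  induction s using Finset.induction_on with
  | empty => simpa using LTS.one
  | insert a s' hx ih =>
      rw [Finset.prod_insert hx, Finset.sum_insert hx, Finset.prod_insert hx]
      exact (h a (Finset.mem_insert_self a s')).mul
        (ih fun i hi => h i (Finset.mem_insert_of_mem hi))

lemma LTS.sum {ι : Type*} (s : Finset ι) (F : ι → MvPowerSeries τ ℚ) (m : ℕ)
    (pf : ι → MvPolynomial τ ℚ) (h : ∀ i ∈ s, LTS (F i) m (pf i))
    (hne : (∑ i ∈ s, pf i) ≠ 0) : LTS (∑ i ∈ s, F i) m (∑ i ∈ s, pf i) := by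
  refine ⟨?_, ?_, hne⟩
  · intro k hk
    rw [homComp_sum]
    exact Finset.sum_eq_zero fun i hi => (h i hi).1 k hk
  · rw [homComp_sum]
    have : ∀ i ∈ s, homComp m (F i) = ↑(pf i) := fun i hi => (h i hi).2.1
    rw [Finset.sum_congr rfl this]
    exact (map_sum (MvPolynomial.coeToMvPowerSeries.ringHom (σ := τ) (R := ℚ)) pf s).symm

lemma LTS_of_lowTerm {A : MvPowerSeries τ ℚ} {p : MvPolynomial τ ℚ}
    (hA : A ≠ 0) (h : lowTerm A = ↑p) : LTS A (ordOf A) p := by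
  refine ⟨fun k hk => homComp_eq_zero_of_lt hk, h ▸ rfl, ?_⟩
  rintro rfl
  apply homComp_ordOf_ne_zero hA
  rw [← lowTerm, h]
  push_cast
  rfl

lemma LTS_of_constantCoeff {A : MvPowerSeries τ ℚ}
    (h : MvPowerSeries.constantCoeff A = 1) : LTS A 0 1 := by
  refine ⟨fun k hk => absurd hk (Nat.not_lt_zero k), ?_, one_ne_zero⟩
  funext d
  rw [homComp_apply, coePoly_apply]
  by_cases hd : d = 0
  · subst hd
    rw [if_pos (degOf_eq_zero.mpr rfl)]
    simpa [MvPolynomial.coeff_one] using (show A 0 = 1 from h)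
  · rw [if_neg (fun hh => hd (degOf_eq_zero.mp hh))]
    simp [MvPolynomial.coeff_one, Ne.symm hd]

end PowerSeriesLayer

end StmtNine

namespace StmtNine

section ExpLayer

variable {τ : Type*} [DecidableEq τ]

lemma expVar_apply (i : τ) (d : τ →₀ ℕ) :
    (expVar i : MvPowerSeries τ ℚ) d =
      if d = Finsupp.single i (d i) then (1 : ℚ) / (d i).factorial else 0 := rfl

lemma one_apply (d : τ →₀ ℕ) : (1 : MvPowerSeries τ ℚ) d = if d = 0 then 1 else 0 :=
  (MvPowerSeries.coeff_apply (1 : MvPowerSeries τ ℚ) d).symm.trans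
    (MvPowerSeries.coeff_one d)

lemma sub_apply (A B : MvPowerSeries τ ℚ) (d : τ →₀ ℕ) : (A - B) d = A d - B d := rfl

lemma expVar_pow_apply (i : τ) (k : ℕ) (d : τ →₀ ℕ) :
    (expVar i ^ k : MvPowerSeries τ ℚ) d =
      if d = Finsupp.single i (d i) then (k : ℚ) ^ (d i) / (d i).factorial else 0 := by
  induction k generalizing d with
  | zero =>
      rw [pow_zero, one_apply]
      by_cases hd : d = 0
      · subst hd
        simp
      · rw [if_neg hd]
        split_ifs with h
        · have hdi : d i ≠ 0 := by
            intro h0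
            apply hd
            rw [h, h0, Finsupp.single_zero]
          simp [zero_pow hdi]
        · rfl
  | succ k ih =>
      rw [pow_succ, mul_apply]
      by_cases hd : d = Finsupp.single i (d i)
      · rw [if_pos hd]
        -- only pairs of singles at i contribute
        set m := d i with hm
        have hsum : ∑ x ∈ Finset.HasAntidiagonal.antidiagonal d, (expVar i ^ k : MvPowerSeries τ ℚ) x.1 *
            (expVar i : MvPowerSeries τ ℚ) x.2 =
            ∑ x ∈ Finset.HasAntidiagonal.antidiagonal m, ((k : ℚ) ^ x.1 / x.1.factorial) * (1 / x.2.factorial) := by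
          conv_lhs => rw [hd]
          rw [Finsupp.antidiagonal_single, Finset.sum_map]
          apply Finset.sum_congr rfl
          intro x _
          have e1 : (Finsupp.single i x.1) i = x.1 := Finsupp.single_eq_same
          have e2 : (Finsupp.single i x.2) i = x.2 := Finsupp.single_eq_same
          simp only [Function.Embedding.coe_prodMap, Function.Embedding.coeFn_mk, Prod.map]
          rw [ih, expVar_apply, e1, e2, if_pos rfl, if_pos rfl]
        rw [hsum]
        rw [Finset.Nat.sum_antidiagonal_eq_sum_range_succ_mk]
        have key : ∀ a ∈ Finset.range (m + 1),
            ((k : ℚ) ^ a / a.factorial) * (1 / (m - a).factorial) =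
              (m.choose a : ℚ) * (k : ℚ) ^ a / m.factorial := by
          intro a ha
          have hle : a ≤ m := Nat.lt_succ_iff.mp (Finset.mem_range.mp ha)
          have hfact : (m.choose a : ℚ) * a.factorial * (m - a).factorial = m.factorial := by
            exact_mod_cast congrArg (Nat.cast : ℕ → ℚ)
              (Nat.choose_mul_factorial_mul_factorial hle)
          have ha0 : (a.factorial : ℚ) ≠ 0 := Nat.cast_ne_zero.mpr a.factorial_ne_zero
          have hma0 : ((m - a).factorial : ℚ) ≠ 0 := Nat.cast_ne_zero.mpr (m - a).factorial_ne_zero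
          have hm0 : (m.factorial : ℚ) ≠ 0 := Nat.cast_ne_zero.mpr m.factorial_ne_zero
          field_simp
          rw [← hfact]
          ring
        rw [Finset.sum_congr rfl key]
        have : ∑ a ∈ Finset.range (m + 1), (m.choose a : ℚ) * (k : ℚ) ^ a / m.factorial =
            (∑ a ∈ Finset.range (m + 1), (k : ℚ) ^ a * (1 : ℚ) ^ (m - a) * (m.choose a : ℚ)) /
              m.factorial := by
          rw [Finset.sum_div]
          apply Finset.sum_congr rfl
          intro a _
          ring
        rw [this, ← add_pow]
        norm_num
      · rw [if_neg hd]
        apply Finset.sum_eq_zero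
        intro x hx
        have hxd := Finset.HasAntidiagonal.mem_antidiagonal.mp hx
        rw [ih, expVar_apply]
        by_cases h1 : x.1 = Finsupp.single i (x.1 i)
        · by_cases h2 : x.2 = Finsupp.single i (x.2 i)
          · exfalso
            apply hd
            have : d = Finsupp.single i (x.1 i + x.2 i) := by
              rw [← hxd, Finsupp.single_add]
              conv_lhs => rw [h1, h2]
            rw [this, Finsupp.single_eq_same]
          · rw [if_neg h2, mul_zero]
        · rw [if_neg h1, zero_mul]

lemma coeff_prod_expVarPow (s : Finset τ) (d : τ → ℕ) (e : τ →₀ ℕ) :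
    ((∏ i ∈ s, expVar i ^ d i : MvPowerSeries τ ℚ)) e =
      if e.support ⊆ s then ∏ i ∈ s, ((d i : ℚ) ^ (e i) / (e i).factorial) else 0 := by
  classical
  induction s using Finset.induction_on generalizing e with
  | empty =>
      rw [Finset.prod_empty, one_apply, Finset.prod_empty]
      by_cases he : e = 0
      · subst he; simp
      · rw [if_neg he, if_neg (by simpa [Finset.subset_empty, Finsupp.support_eq_empty] using he)]
  | insert j s hj ih =>
      rw [Finset.prod_insert hj, mul_apply]
      rw [Finset.sum_eq_single (Finsupp.single j (e j), e.erase j)]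
      · have e1 : (Finsupp.single j (e j)) j = e j := Finsupp.single_eq_same
        rw [expVar_pow_apply, e1, if_pos rfl, ih]
        have hsupp : (e.erase j).support ⊆ s ↔ e.support ⊆ insert j s := by
          rw [Finsupp.support_erase]
          constructor
          · intro h x hx
            by_cases hxj : x = j
            · rw [hxj]; exact Finset.mem_insert_self j s
            · exact Finset.mem_insert_of_mem (h (Finset.mem_erase.mpr ⟨hxj, hx⟩))
          · intro h x hx
            obtain ⟨hxj, hxe⟩ := Finset.mem_erase.mp hx
            rcases Finset.mem_insert.mp (h hxe) with h' | h'
            · exact absurd h' hxj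
            · exact h'
        by_cases hc : e.support ⊆ insert j s
        · rw [if_pos (hsupp.mpr hc), if_pos hc, Finset.prod_insert hj]
          congr 1
          apply Finset.prod_congr rfl
          intro i hi
          have hij : i ≠ j := fun h => hj (h ▸ hi)
          rw [Finsupp.erase_ne hij]
        · rw [if_neg (fun h => hc (hsupp.mp h)), if_neg hc, mul_zero]
      · intro b hb hbne
        have hbd := Finset.HasAntidiagonal.mem_antidiagonal.mp hb
        rw [expVar_pow_apply]
        by_cases h1 : b.1 = Finsupp.single j (b.1 j)
        · rw [ih]
          by_cases h2 : b.2.support ⊆ s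
          · exfalso
            apply hbne
            have hb2j : b.2 j = 0 := Finsupp.notMem_support_iff.mp (fun h => hj (h2 h))
            have hej : e j = b.1 j := by
              have : b.1 j + b.2 j = e j := by rw [← Finsupp.add_apply, hbd]
              omega
            have hb1 : b.1 = Finsupp.single j (e j) := by rw [hej]; exact h1
            have hb2 : b.2 = e.erase j := by
              ext x
              by_cases hxj : x = j
              · subst hxj; rw [hb2j, Finsupp.erase_same]
              · have hax : b.1 x + b.2 x = e x := by rw [← Finsupp.add_apply, hbd]
                rw [Finsupp.erase_ne hxj, ← hax, hb1, Finsupp.single_apply, if_neg (Ne.symm hxj),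
                  zero_add]
            rw [Prod.ext_iff]
            exact ⟨hb1, hb2⟩
          · rw [if_neg h2, mul_zero]
        · rw [if_neg h1, zero_mul]
      · intro h
        exact absurd (Finset.HasAntidiagonal.mem_antidiagonal.mpr (Finsupp.single_add_erase j e)) h

/-- The basic coefficient weight: `coeff e (exp substitution of monomial d)`. -/
def Wt (e d : τ →₀ ℕ) : ℚ := ∏ i ∈ e.support, ((d i : ℚ) ^ (e i) / (e i).factorial)

lemma coeff_prod_expVarPow_support (d e : τ →₀ ℕ) :
    ((∏ i ∈ d.support, expVar i ^ d i : MvPowerSeries τ ℚ)) e = Wt e d := by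
  rw [coeff_prod_expVarPow]
  by_cases hc : e.support ⊆ d.support
  · rw [if_pos hc, Wt, Finset.prod_subset hc]
    intro x _ hx
    rw [Finsupp.notMem_support_iff.mp hx]
    norm_num
  · rw [if_neg hc, Wt]
    obtain ⟨i, hie, hid⟩ := Finset.not_subset.mp hc
    apply (Finset.prod_eq_zero hie _).symm
    rw [Finsupp.notMem_support_iff.mp hid]
    rw [Nat.cast_zero, zero_pow (Finsupp.mem_support_iff.mp hie), zero_div]

lemma Wt_zero_left (d : τ →₀ ℕ) : Wt 0 d = 1 := by simp [Wt]

lemma Wt_single_one (i : τ) (d : τ →₀ ℕ) : Wt (Finsupp.single i 1) d = (d i : ℚ) := by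
  rw [Wt, Finsupp.support_single_ne_zero i one_ne_zero, Finset.prod_singleton,
    Finsupp.single_eq_same]
  norm_num

lemma Wt_mapDomain (f : τ → τ) (hf : Function.Injective f) (e d : τ →₀ ℕ) :
    Wt (Finsupp.mapDomain f e) (Finsupp.mapDomain f d) = Wt e d := by
  rw [Wt, Wt, Finsupp.mapDomain_support_of_injective hf, Finset.prod_image
    (fun a _ b _ h => hf h)]
  apply Finset.prod_congr rfl
  intro i _
  rw [Finsupp.mapDomain_apply hf, Finsupp.mapDomain_apply hf]

lemma degOf_mapDomain (f : τ → τ) (d : τ →₀ ℕ) :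
    degOf (Finsupp.mapDomain f d) = degOf d := by
  rw [degOf, degOf, Finsupp.sum_mapDomain_index (fun _ => rfl) (fun _ _ _ => rfl)]

end ExpLayer

end StmtNine

namespace StmtNine

section ExpLayer2

variable {τ : Type*} [DecidableEq τ]

lemma C_mul_apply (c : ℚ) (B : MvPowerSeries τ ℚ) (d : τ →₀ ℕ) :
    (MvPowerSeries.C (σ := τ) c * B) d = c * B d := by
  have := MvPowerSeries.coeff_C_mul d B c
  rwa [MvPowerSeries.coeff_apply, MvPowerSeries.coeff_apply] at this

lemma sum_series_apply {ι : Type*} (s : Finset ι) (F : ι → MvPowerSeries τ ℚ) (d : τ →₀ ℕ) :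
    (∑ i ∈ s, F i) d = ∑ i ∈ s, F i d := by
  exact map_sum (MvPowerSeries.coeff d) F s

lemma degOf_single (i : τ) : degOf (Finsupp.single i 1) = 1 :=
  Finsupp.sum_single_index rfl

lemma degOf_eq_one {e : τ →₀ ℕ} (h : degOf e = 1) : ∃ i, e = Finsupp.single i 1 := by
  have he0 : e ≠ 0 := fun h0 => by rw [h0] at h; simp [degOf] at h
  obtain ⟨i, hi⟩ := Finsupp.support_nonempty_iff.mpr he0
  have hdeg : degOf e = ∑ j ∈ e.support, e j := rfl
  have hei : 1 ≤ e i := Nat.one_le_iff_ne_zero.mpr (Finsupp.mem_support_iff.mp hi)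
  have hsum := hdeg ▸ h
  have hsingle : e.support = {i} := by
    by_contra hs
    have : ∃ j ∈ e.support, j ≠ i := by
      by_contra hj
      push_neg at hj
      apply hs
      apply Finset.eq_singleton_iff_unique_mem.mpr ⟨hi, fun j hjm => hj j hjm⟩
    obtain ⟨j, hjm, hji⟩ := this
    have h2 : e i + e j ≤ ∑ k ∈ e.support, e k := by
      have : ∑ k ∈ e.support, e k = e i + ∑ k ∈ e.support.erase i, e k :=
        (Finset.add_sum_erase _ _ hi).symm
      rw [this]
      have : e j ≤ ∑ k ∈ e.support.erase i, e k :=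
        Finset.single_le_sum (fun k _ => Nat.zero_le _) (Finset.mem_erase.mpr ⟨hji, hjm⟩)
      omega
    have hej : 1 ≤ e j := Nat.one_le_iff_ne_zero.mpr (Finsupp.mem_support_iff.mp hjm)
    omega
  refine ⟨i, ?_⟩
  have hei1 : e i = 1 := by
    have : ∑ k ∈ e.support, e k = e i := by rw [hsingle, Finset.sum_singleton]
    omega
  ext j
  by_cases hj : j = i
  · subst hj; rw [hei1, Finsupp.single_eq_same]
  · rw [Finsupp.single_apply, if_neg (Ne.symm hj)]
    by_contra hz
    have : j ∈ e.support := Finsupp.mem_support_iff.mpr hz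
    rw [hsingle, Finset.mem_singleton] at this
    exact hj this

variable [Fintype τ]

/-- The linearization of a monomial exponent. -/
def linPoly (d : τ →₀ ℕ) : MvPolynomial τ ℚ := ∑ i : τ, MvPolynomial.C (d i : ℚ) * MvPolynomial.X i

lemma coeff_linPoly_single (d : τ →₀ ℕ) (i : τ) :
    MvPolynomial.coeff (Finsupp.single i 1) (linPoly d) = (d i : ℚ) := by
  rw [linPoly, MvPolynomial.coeff_sum]
  have : ∀ j : τ, MvPolynomial.coeff (Finsupp.single i 1)
      (MvPolynomial.C ((d j : ℚ)) * MvPolynomial.X j) = if j = i then (d j : ℚ) else 0 := by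
    intro j
    rw [MvPolynomial.coeff_C_mul, MvPolynomial.coeff_X']
    split_ifs with h1 h2 h2
    · simp
    · exact absurd (Finsupp.single_left_injective one_ne_zero h1) h2
    · exact absurd (by rw [h2]) h1
    · simp
  rw [Finset.sum_congr rfl fun j _ => this j, Finset.sum_ite_eq' Finset.univ i fun j => (d j : ℚ),
    if_pos (Finset.mem_univ i)]

lemma coeff_linPoly_nonsingle (d : τ →₀ ℕ) (e : τ →₀ ℕ) (he : ∀ i : τ, e ≠ Finsupp.single i 1) :
    MvPolynomial.coeff e (linPoly d) = 0 := by
  rw [linPoly, MvPolynomial.coeff_sum]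
  apply Finset.sum_eq_zero
  intro j _
  rw [MvPolynomial.coeff_C_mul, MvPolynomial.coeff_X', if_neg (fun h => he j h.symm), mul_zero]

lemma linPoly_single (x : τ) : linPoly (Finsupp.single x 1) = MvPolynomial.X x := by
  rw [linPoly]
  have : ∀ i : τ, MvPolynomial.C (((Finsupp.single x 1 : τ →₀ ℕ) i : ℚ)) * MvPolynomial.X i =
      if x = i then MvPolynomial.X i else 0 := by
    intro i
    rw [Finsupp.single_apply]
    split_ifs <;> simp
  rw [Finset.sum_congr rfl fun i _ => this i, Finset.sum_ite_eq Finset.univ x MvPolynomial.X,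
    if_pos (Finset.mem_univ x)]

lemma linPoly_add (d e : τ →₀ ℕ) : linPoly (d + e) = linPoly d + linPoly e := by
  simp only [linPoly, Finsupp.add_apply, Nat.cast_add, map_add, add_mul]
  rw [Finset.sum_add_distrib]

end ExpLayer2

section ExpSubstLayer

variable {g n : ℕ}

lemma expSubst_monomial_apply (d : (Fin (g+1) ⊕ Fin n) →₀ ℕ) (c : ℚ) (e : (Fin (g+1) ⊕ Fin n) →₀ ℕ) :
    (expSubst g n (MvPolynomial.monomial d c)) e = c * Wt e d := by
  rw [expSubst, MvPolynomial.aeval_monomial]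
  have halg : (algebraMap ℚ (MvPowerSeries (Fin (g+1) ⊕ Fin n) ℚ)) c =
      MvPowerSeries.C c := rfl
  rw [halg, C_mul_apply]
  congr 1
  rw [Finsupp.prod]
  exact coeff_prod_expVarPow_support d e

lemma expSubst_apply (p : Pall g n) (e : (Fin (g+1) ⊕ Fin n) →₀ ℕ) :
    (expSubst g n p) e = ∑ d ∈ p.support, MvPolynomial.coeff d p * Wt e d := by
  conv_lhs => rw [p.as_sum, map_sum]
  rw [sum_series_apply]
  exact Finset.sum_congr rfl fun d _ => expSubst_monomial_apply d _ e

lemma expSubst_injective : Function.Injective (expSubst g n) := by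
  rw [injective_iff_map_eq_zero]
  intro p hp
  by_contra hp0
  classical
  have hmono : ∀ e : (Fin (g+1) ⊕ Fin n) →₀ ℕ, ∑ d ∈ p.support, MvPolynomial.coeff d p *
      MvPolynomial.eval (fun i => (d i : ℚ)) (MvPolynomial.monomial e (1 : ℚ)) = 0 := by
    intro e
    have he : (expSubst g n p) e = 0 := by rw [hp]; rfl
    rw [expSubst_apply] at he
    have hWt : ∀ d : (Fin (g+1) ⊕ Fin n) →₀ ℕ, Wt e d =
        MvPolynomial.eval (fun i => (d i : ℚ)) (MvPolynomial.monomial e (1 : ℚ)) *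
          ∏ i ∈ e.support, (1 / ((e i).factorial : ℚ)) := by
      intro d
      rw [Wt, MvPolynomial.eval_monomial, one_mul, Finsupp.prod, ← Finset.prod_mul_distrib]
      exact Finset.prod_congr rfl fun i _ => by rw [div_eq_mul_one_div]
    have hc : (∏ i ∈ e.support, (1 / ((e i).factorial : ℚ))) ≠ 0 :=
      Finset.prod_ne_zero_iff.mpr fun i _ =>
        one_div_ne_zero (Nat.cast_ne_zero.mpr (e i).factorial_ne_zero)
    rw [Finset.sum_congr rfl fun d _ => by rw [hWt d]] at he
    have he2 : (∑ d ∈ p.support, MvPolynomial.coeff d p *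
        MvPolynomial.eval (fun i => (d i : ℚ)) (MvPolynomial.monomial e (1 : ℚ))) *
          (∏ i ∈ e.support, (1 / ((e i).factorial : ℚ))) = 0 := by
      rw [Finset.sum_mul, ← he]
      exact Finset.sum_congr rfl fun d _ => by ring
    exact (mul_eq_zero.mp he2).resolve_right hc
  have hq : ∀ q : MvPolynomial (Fin (g+1) ⊕ Fin n) ℚ, ∑ d ∈ p.support,
      MvPolynomial.coeff d p * MvPolynomial.eval (fun i => (d i : ℚ)) q = 0 := by
    intro q
    induction q using MvPolynomial.induction_on' with
    | monomial u a =>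
        have hv : ∀ d : (Fin (g+1) ⊕ Fin n) →₀ ℕ,
            MvPolynomial.eval (fun i => (d i : ℚ)) (MvPolynomial.monomial u a) =
              a * MvPolynomial.eval (fun i => (d i : ℚ)) (MvPolynomial.monomial u (1:ℚ)) := by
          intro d
          rw [MvPolynomial.eval_monomial, MvPolynomial.eval_monomial, one_mul]
        rw [Finset.sum_congr rfl fun d _ => by rw [hv d]]
        have : ∑ d ∈ p.support, MvPolynomial.coeff d p *
            (a * MvPolynomial.eval (fun i => (d i : ℚ)) (MvPolynomial.monomial u (1:ℚ))) =
            a * ∑ d ∈ p.support, MvPolynomial.coeff d p *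
              MvPolynomial.eval (fun i => (d i : ℚ)) (MvPolynomial.monomial u (1:ℚ)) := by
          rw [Finset.mul_sum]
          exact Finset.sum_congr rfl fun d _ => by ring
        rw [this, hmono u, mul_zero]
    | add q r hq' hr' =>
        simp only [map_add, mul_add, Finset.sum_add_distrib, hq', hr', add_zero]
  obtain ⟨d0, hd0⟩ := MvPolynomial.support_nonempty.mpr hp0
  have hpick : ∀ d ∈ p.support.erase d0, ∃ i, d0 i ≠ d i := by
    intro d hd
    exact Finsupp.ne_iff.mp (Ne.symm (Finset.mem_erase.mp hd).1)
  choose pick hpick' using hpick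
  set P : MvPolynomial (Fin (g+1) ⊕ Fin n) ℚ := ∏ d ∈ (p.support.erase d0).attach,
    (MvPolynomial.X (pick d.1 d.2) - MvPolynomial.C ((d.1 (pick d.1 d.2) : ℚ))) with hP
  have hevalP : ∀ d ∈ p.support.erase d0, MvPolynomial.eval (fun i => (d i : ℚ)) P = 0 := by
    intro d hd
    rw [hP, map_prod]
    apply Finset.prod_eq_zero (Finset.mem_attach _ ⟨d, hd⟩)
    simp
  have hevalP0 : MvPolynomial.eval (fun i => (d0 i : ℚ)) P ≠ 0 := by
    rw [hP, map_prod]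
    apply Finset.prod_ne_zero_iff.mpr
    intro d _
    simp only [map_sub, MvPolynomial.eval_X, MvPolynomial.eval_C]
    intro hz
    exact hpick' d.1 d.2 (by exact_mod_cast sub_eq_zero.mp hz)
  have hfin := hq P
  rw [← Finset.add_sum_erase _ _ hd0,
    Finset.sum_eq_zero (fun d hd => by rw [hevalP d hd, mul_zero]), add_zero] at hfin
  exact MvPolynomial.mem_support_iff.mp hd0 ((mul_eq_zero.mp hfin).resolve_right hevalP0)

lemma expSubst_ne_zero {p : Pall g n} (hp : p ≠ 0) : expSubst g n p ≠ 0 :=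
  fun h => hp (expSubst_injective (h.trans (map_zero _).symm))

lemma expSubst_rename_apply (τe : (Fin (g+1) ⊕ Fin n) ≃ (Fin (g+1) ⊕ Fin n))
    (p : Pall g n) (e : (Fin (g+1) ⊕ Fin n) →₀ ℕ) :
    (expSubst g n (MvPolynomial.rename τe p)) (Finsupp.mapDomain τe e) = (expSubst g n p) e := by
  rw [expSubst_apply, expSubst_apply, MvPolynomial.support_rename_of_injective τe.injective,
    Finset.sum_image (fun a _ b _ h => Finsupp.mapDomain_injective τe.injective h)]
  apply Finset.sum_congr rfl
  intro d _
  rw [MvPolynomial.coeff_rename_mapDomain _ τe.injective, Wt_mapDomain _ τe.injective]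

lemma mapDomain_symm_cancel (τe : (Fin (g+1) ⊕ Fin n) ≃ (Fin (g+1) ⊕ Fin n))
    (e : (Fin (g+1) ⊕ Fin n) →₀ ℕ) :
    Finsupp.mapDomain τe (Finsupp.mapDomain τe.symm e) = e := by
  rw [← Finsupp.mapDomain_comp]
  simp [Equiv.self_comp_symm, Finsupp.mapDomain_id]

lemma LTS.rename_exp {p q : Pall g n} {m : ℕ}
    (τe : (Fin (g+1) ⊕ Fin n) ≃ (Fin (g+1) ⊕ Fin n))
    (h : LTS (expSubst g n p) m q) : LTS (expSubst g n (MvPolynomial.rename τe p)) m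
      (MvPolynomial.rename τe q) := by
  have key : ∀ e, (expSubst g n (MvPolynomial.rename τe p)) e =
      (expSubst g n p) (Finsupp.mapDomain τe.symm e) := by
    intro e
    conv_lhs => rw [← mapDomain_symm_cancel τe e]
    rw [expSubst_rename_apply]
  have hdeg : ∀ e : (Fin (g+1) ⊕ Fin n) →₀ ℕ, degOf (Finsupp.mapDomain (⇑τe.symm) e) = degOf e :=
    fun e => degOf_mapDomain _ e
  have hco : ∀ e, MvPolynomial.coeff e (MvPolynomial.rename τe q) =
      MvPolynomial.coeff (Finsupp.mapDomain τe.symm e) q := by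
    intro e
    conv_lhs => rw [← mapDomain_symm_cancel τe e]
    rw [MvPolynomial.coeff_rename_mapDomain _ τe.injective]
  refine ⟨?_, ?_, fun hz => h.2.2
    ((MvPolynomial.rename_injective _ τe.injective) (by rw [hz, map_zero]))⟩
  · intro k hk
    funext e
    rw [homComp_apply, key]
    split_ifs with hd
    · rw [← hdeg e] at hd
      have := congrFun (h.1 k hk) (Finsupp.mapDomain τe.symm e)
      simpa [homComp_apply, hd, zero_apply] using this
    · rfl
  · funext e
    rw [homComp_apply, coePoly_apply, hco]
    split_ifs with hd
    · rw [key]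
      exact h.coeff_eq (by rw [hdeg e]; exact hd)
    · exact (h.coeff_eq_zero (by rw [hdeg e]; exact hd)).symm

lemma LTS_expSubst_binom (d d' : (Fin (g+1) ⊕ Fin n) →₀ ℕ) (hne : d ≠ d') :
    LTS (expSubst g n (MvPolynomial.monomial d 1 - MvPolynomial.monomial d' 1)) 1
      (linPoly d - linPoly d') := by
  have hlin : linPoly d - linPoly d' ≠ 0 := by
    obtain ⟨i, hi⟩ := Finsupp.ne_iff.mp hne
    intro hz
    have := congrArg (MvPolynomial.coeff (Finsupp.single i 1)) hz
    rw [MvPolynomial.coeff_sub, coeff_linPoly_single, coeff_linPoly_single,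
      MvPolynomial.coeff_zero] at this
    exact hi (Nat.cast_injective (by linarith [sub_eq_zero.mp this] : ((d i : ℚ)) = (d' i : ℚ)))
  refine ⟨?_, ?_, hlin⟩
  · intro k hk
    interval_cases k
    funext e
    rw [homComp_apply]
    split_ifs with hd
    · have he0 : e = 0 := degOf_eq_zero.mp hd
      subst he0
      rw [map_sub, sub_apply, expSubst_monomial_apply, expSubst_monomial_apply,
        Wt_zero_left, Wt_zero_left]
      show (1 : ℚ) * 1 - 1 * 1 = 0
      ring
    · rfl
  · funext e
    rw [homComp_apply, coePoly_apply, MvPolynomial.coeff_sub]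
    split_ifs with hd
    · obtain ⟨i, rfl⟩ := degOf_eq_one hd
      rw [map_sub, sub_apply, expSubst_monomial_apply, expSubst_monomial_apply,
        Wt_single_one, Wt_single_one, coeff_linPoly_single, coeff_linPoly_single]
      ring
    · have hns : ∀ i : Fin (g+1) ⊕ Fin n, e ≠ Finsupp.single i 1 := by
        intro i hi
        rw [hi, degOf_single] at hd
        exact hd rfl
      rw [coeff_linPoly_nonsingle _ _ hns, coeff_linPoly_nonsingle _ _ hns, sub_zero]

lemma constantCoeff_expSubst_X (v : Fin (g+1) ⊕ Fin n) :
    MvPowerSeries.constantCoeff (expSubst g n (MvPolynomial.X v)) = 1 := by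
  rw [expSubst, MvPolynomial.aeval_X]
  show (expVar v) 0 = 1
  rw [expVar_apply]
  simp

end ExpSubstLayer

end StmtNine

namespace StmtNine

section FieldLayer

variable {g n : ℕ}

/-- The underlying polynomial substitution `Pall g n → ℚ(q,t)[w]`. -/
abbrev psub (g n : ℕ) : Pall g n →ₐ[ℚ] MvPolynomial (Fin n) (FF g) :=
  MvPolynomial.aeval (R := ℚ)
    (Sum.elim (fun i => (C (gen g i) : MvPolynomial (Fin n) (FF g))) fun a => X a)

lemma liftK_apply (p : Pall g n) : liftK g n p = ι g n (psub g n p) := rfl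

lemma psub_X_inl (i : Fin (g+1)) : psub g n (X (Sum.inl i)) = C (gen g i) := by
  simp [psub]

lemma psub_X_inr (a : Fin n) : psub g n (X (Sum.inr a)) = X a := by
  simp [psub]

lemma liftK_X_inl (i : Fin (g+1)) : liftK g n (X (Sum.inl i)) = cK g n (gen g i) := by
  rw [liftK_apply, psub_X_inl]; rfl

lemma liftK_X_inr (a : Fin n) : liftK g n (X (Sum.inr a)) = vv g n a := by
  rw [liftK_apply, psub_X_inr]; rfl

lemma ι_injective : Function.Injective (ι g n) := IsFractionRing.injective _ _

lemma psub_injective : Function.Injective (psub g n) := by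
  set E := ((MvPolynomial.renameEquiv ℚ (Equiv.sumComm (Fin (g+1)) (Fin n))).trans
    (MvPolynomial.sumAlgEquiv ℚ (Fin n) (Fin (g+1)))) with hE
  have key : (psub g n).toRingHom =
      (MvPolynomial.map (algebraMap (MvPolynomial (Fin (g+1)) ℚ) (FF g))).comp
        (E.toAlgHom.toRingHom) := by
    apply MvPolynomial.ringHom_ext
    · intro r
      have hsub := Subsingleton.elim
        ((psub g n).toRingHom.comp (MvPolynomial.C : ℚ →+* Pall g n))
        (((MvPolynomial.map (algebraMap (MvPolynomial (Fin (g+1)) ℚ) (FF g))).comp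
          (E.toAlgHom.toRingHom)).comp (MvPolynomial.C : ℚ →+* Pall g n))
      exact RingHom.congr_fun hsub r
    · intro v
      rcases v with i | a <;>
        simp [hE, psub, gen]
  have h1 : Function.Injective
      (MvPolynomial.map (σ := Fin n) (algebraMap (MvPolynomial (Fin (g+1)) ℚ) (FF g))) :=
    MvPolynomial.map_injective _ (IsFractionRing.injective _ _)
  intro p q hpq
  have hpq' : (psub g n).toRingHom p = (psub g n).toRingHom q := hpq
  rw [key] at hpq'
  simp only [RingHom.comp_apply, AlgHom.toRingHom_eq_coe, RingHom.coe_coe,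
    AlgEquiv.toAlgHom_eq_coe] at hpq'
  exact E.injective (h1 hpq')

lemma liftK_injective : Function.Injective (liftK g n) := by
  intro p q h
  exact psub_injective (ι_injective h)

lemma liftK_ne_zero {p : Pall g n} (hp : p ≠ 0) : liftK g n p ≠ 0 :=
  fun h => hp (liftK_injective (h.trans (map_zero _).symm))

lemma permK_ι (σ : Equiv.Perm (Fin n)) (p : MvPolynomial (Fin n) (FF g)) :
    permK g n σ (ι g n p) = ι g n (MvPolynomial.rename σ p) := by
  rw [permK]
  exact IsFractionRing.ringEquivOfRingEquiv_algebraMap _ p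

lemma permK_vv (σ : Equiv.Perm (Fin n)) (a : Fin n) :
    permK g n σ (vv g n a) = vv g n (σ a) := by
  rw [vv, permK_ι, MvPolynomial.rename_X]; rfl

lemma permK_cK (σ : Equiv.Perm (Fin n)) (r : FF g) :
    permK g n σ (cK g n r) = cK g n r := by
  rw [cK, permK_ι, MvPolynomial.rename_C]

lemma rename_psub (σ : Equiv.Perm (Fin n)) (p : Pall g n) :
    MvPolynomial.rename ⇑σ (psub g n p) = psub g n (MvPolynomial.rename (Sum.map id ⇑σ) p) := by
  induction p using MvPolynomial.induction_on with
  | C q => simp [MvPolynomial.algebraMap_eq]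
  | add p q hp hq => simp only [map_add, hp, hq]
  | mul_X p v hp =>
      rw [map_mul, map_mul, map_mul, hp]
      congr 1
      rcases v with i | a <;> simp [psub]

lemma permK_liftK (σ : Equiv.Perm (Fin n)) (p : Pall g n) :
    permK g n σ (liftK g n p) = liftK g n (MvPolynomial.rename (Sum.map id ⇑σ) p) := by
  rw [liftK_apply, permK_ι, rename_psub, liftK_apply]

end FieldLayer

end StmtNine

namespace StmtNine

section ZetaLayer

variable {g n : ℕ}

lemma gen_ne_zero (i : Fin (g+1)) : gen g i ≠ 0 := by
  intro h
  have := IsFractionRing.injective (MvPolynomial (Fin (g+1)) ℚ) (FF g)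
    (h.trans (map_zero _).symm)
  exact MvPolynomial.X_ne_zero i this

lemma cK_ne_zero {r : FF g} (hr : r ≠ 0) : cK g n r ≠ 0 := by
  intro h
  have h2 := ι_injective (g := g) (n := n) (h.trans (map_zero _).symm)
  rw [show (0 : MvPolynomial (Fin n) (FF g)) = C 0 from (map_zero C).symm] at h2
  exact hr (MvPolynomial.C_injective _ _ h2)

lemma vv_ne_zero (a : Fin n) : vv g n a ≠ 0 := by
  intro h
  have h2 := ι_injective (g := g) (n := n) (h.trans (map_zero _).symm)
  exact MvPolynomial.X_ne_zero a h2

lemma X_sub_X_ne_zero {a b : Fin n} (hab : a ≠ b) :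
    (X a - X b : MvPolynomial (Fin n) (FF g)) ≠ 0 :=
  sub_ne_zero.mpr fun h => hab (MvPolynomial.X_injective h)

lemma vv_sub_vv_ne_zero {a b : Fin n} (hab : a ≠ b) : vv g n a - vv g n b ≠ 0 := by
  intro h
  have : ι g n (X a - X b) = 0 := by rw [map_sub]; exact h
  exact X_sub_X_ne_zero hab (ι_injective (this.trans (map_zero _).symm))

lemma XP_sub_XP_ne_zero {a b : Fin n} (hab : a ≠ b) :
    (X (Sum.inr a) - X (Sum.inr b) : Pall g n) ≠ 0 :=
  sub_ne_zero.mpr fun h => hab (Sum.inr_injective (MvPolynomial.X_injective h))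

lemma zetaMul_eq_div {a b : Fin n} (hab : a ≠ b) :
    zetaMul g n (vv g n a / vv g n b) =
      liftK g n (zetaMulNum g n a b) / liftK g n (zetaMulDen g n a b) := by
  have hB : vv g n b ≠ 0 := vv_ne_zero b
  have hq : cK g n (gen g 0) ≠ 0 := cK_ne_zero (gen_ne_zero 0)
  have ht : ∀ e : Fin g, cK g n (gen g e.succ) ≠ 0 := fun e => cK_ne_zero (gen_ne_zero _)
  have hAB : vv g n a - vv g n b ≠ 0 := vv_sub_vv_ne_zero hab
  have hx1 : vv g n a / vv g n b - 1 ≠ 0 := by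
    rw [div_sub_one hB]
    exact div_ne_zero hAB hB
  have hNum : liftK g n (zetaMulNum g n a b) =
      (vv g n a - cK g n (gen g 0) * vv g n b) * ∏ e : Fin g,
        ((vv g n a * cK g n (gen g e.succ) - vv g n b) *
          (vv g n a * cK g n (gen g 0) - vv g n b * cK g n (gen g e.succ))) := by
    simp only [zetaMulNum, map_sub, map_mul, map_prod, liftK_X_inl, liftK_X_inr]
  have hDen : liftK g n (zetaMulDen g n a b) =
      cK g n (gen g 0) * (∏ e : Fin g, cK g n (gen g e.succ)) * vv g n b ^ (2*g) *
        (vv g n a - vv g n b) := by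
    simp only [zetaMulDen, map_sub, map_mul, map_pow, map_prod, liftK_X_inl, liftK_X_inr]
  rw [zetaMul, hNum, hDen]
  have h1 : (vv g n a / vv g n b * (cK g n (gen g 0))⁻¹ - 1) / (vv g n a / vv g n b - 1) =
      (vv g n a - cK g n (gen g 0) * vv g n b) / (cK g n (gen g 0) * (vv g n a - vv g n b)) := by
    rw [div_eq_div_iff hx1 (mul_ne_zero hq hAB)]
    field_simp [hB, hq]
  have h2 : ∀ e : Fin g, (vv g n a / vv g n b * cK g n (gen g e.succ) - 1) *
      (vv g n a / vv g n b * cK g n (gen g 0) * (cK g n (gen g e.succ))⁻¹ - 1) =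
      ((vv g n a * cK g n (gen g e.succ) - vv g n b) *
        (vv g n a * cK g n (gen g 0) - vv g n b * cK g n (gen g e.succ))) /
        (vv g n b ^ 2 * cK g n (gen g e.succ)) := by
    intro e
    have e1 : vv g n a / vv g n b * cK g n (gen g e.succ) - 1 =
        (vv g n a * cK g n (gen g e.succ) - vv g n b) / vv g n b := by
      rw [div_mul_eq_mul_div, div_sub_one hB]
    have e2 : vv g n a / vv g n b * cK g n (gen g 0) * (cK g n (gen g e.succ))⁻¹ - 1 =
        (vv g n a * cK g n (gen g 0) - vv g n b * cK g n (gen g e.succ)) /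
          (vv g n b * cK g n (gen g e.succ)) := by
      rw [div_mul_eq_mul_div, ← div_eq_mul_inv, div_div, div_sub_one (mul_ne_zero hB (ht e))]
    rw [e1, e2, div_mul_div_comm]
    congr 1
    ring
  rw [Finset.prod_congr rfl fun e _ => h2 e, Finset.prod_div_distrib, h1]
  have hd : (∏ _e : Fin g, vv g n b ^ 2 * cK g n (gen g _e.succ)) =
      vv g n b ^ (2*g) * ∏ e : Fin g, cK g n (gen g e.succ) := by
    rw [Finset.prod_mul_distrib, Finset.prod_const, Finset.card_univ, Fintype.card_fin,
      ← pow_mul]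
  rw [hd, div_mul_div_comm]
  congr 1
  ring

lemma zetaAdd_eq_div (a b : Fin n) :
    zetaAdd g n (vv g n a - vv g n b) =
      liftK g n (zetaAddNum g n a b) /
        liftK g n (X (Sum.inr a) - X (Sum.inr b)) := by
  rw [zetaAdd, div_mul_eq_mul_div]
  congr 1
  · simp only [zetaAddNum, map_mul, map_sub, map_add, map_prod, liftK_X_inl, liftK_X_inr]
  · simp only [map_sub, liftK_X_inr]

end ZetaLayer

end StmtNine

namespace StmtNine

section CombLayer

variable {n : ℕ}

lemma prod_filter_lt {M : Type*} [CommMonoid M] (H : Fin n → Fin n → M) :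
    ∏ x ∈ Finset.univ.offDiag.filter (fun x : Fin n × Fin n => x.1 < x.2), H x.1 x.2 =
      ∏ a : Fin n, ∏ b ∈ Finset.Ioi a, H a b := by
  rw [Finset.prod_sigma' Finset.univ (fun a => Finset.Ioi a) (fun a b => H a b)]
  apply Finset.prod_nbij' (fun x : Fin n × Fin n => (⟨x.1, x.2⟩ : Σ _ : Fin n, Fin n))
    (fun y : Σ _ : Fin n, Fin n => (y.1, y.2))
  · intro x hx
    obtain ⟨hxo, hxl⟩ := Finset.mem_filter.mp hx
    exact Finset.mem_sigma.mpr ⟨Finset.mem_univ _, Finset.mem_Ioi.mpr hxl⟩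
  · intro y hy
    have := (Finset.mem_sigma.mp hy).2
    refine Finset.mem_filter.mpr ⟨Finset.mem_offDiag.mpr
      ⟨Finset.mem_univ _, Finset.mem_univ _, ?_⟩, Finset.mem_Ioi.mp this⟩
    exact ne_of_lt (Finset.mem_Ioi.mp this)
  · intro x _; rfl
  · intro y _; rfl
  · intro x _; rfl

lemma prod_offDiag_perm {M : Type*} [CommMonoid M] (σ : Equiv.Perm (Fin n))
    (F : Fin n → Fin n → M) :
    ∏ x ∈ Finset.univ.offDiag, F (σ x.1) (σ x.2) = ∏ x ∈ Finset.univ.offDiag, F x.1 x.2 := by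
  apply Finset.prod_nbij' (fun x : Fin n × Fin n => (σ x.1, σ x.2))
    (fun x : Fin n × Fin n => (σ.symm x.1, σ.symm x.2))
  · intro x hx
    obtain ⟨-, -, hne⟩ := Finset.mem_offDiag.mp hx
    exact Finset.mem_offDiag.mpr ⟨Finset.mem_univ _, Finset.mem_univ _,
      fun h => hne (σ.injective h)⟩
  · intro x hx
    obtain ⟨-, -, hne⟩ := Finset.mem_offDiag.mp hx
    exact Finset.mem_offDiag.mpr ⟨Finset.mem_univ _, Finset.mem_univ _,
      fun h => hne (σ.symm.injective h)⟩
  · intro x _; simp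
  · intro x _; simp
  · intro x _; rfl

lemma prod_offDiag_split {M : Type*} [CommMonoid M] (σ : Equiv.Perm (Fin n))
    (F : Fin n → Fin n → M) :
    ∏ x ∈ Finset.univ.offDiag, F x.1 x.2 =
      (∏ a : Fin n, ∏ b ∈ Finset.Ioi a, F (σ a) (σ b)) *
        (∏ a : Fin n, ∏ b ∈ Finset.Ioi a, F (σ b) (σ a)) := by
  rw [← prod_offDiag_perm σ F,
    ← Finset.prod_filter_mul_prod_filter_not Finset.univ.offDiag
      (fun x : Fin n × Fin n => x.1 < x.2) (fun x => F (σ x.1) (σ x.2))]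
  congr 1
  · exact prod_filter_lt fun a b => F (σ a) (σ b)
  · have hset : Finset.univ.offDiag.filter (fun x : Fin n × Fin n => ¬ x.1 < x.2) =
        Finset.univ.offDiag.filter (fun x : Fin n × Fin n => x.2 < x.1) := by
      apply Finset.filter_congr
      intro x hx
      have hne := (Finset.mem_offDiag.mp hx).2.2
      constructor
      · intro hnl
        rcases lt_or_gt_of_ne hne with h | h
        · exact absurd h hnl
        · exact h
      · intro hgt
        exact not_lt_of_gt hgt
    rw [hset]
    have hswap : ∏ x ∈ Finset.univ.offDiag.filter (fun x : Fin n × Fin n => x.2 < x.1),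
        F (σ x.1) (σ x.2) =
        ∏ x ∈ Finset.univ.offDiag.filter (fun x : Fin n × Fin n => x.1 < x.2),
          F (σ x.2) (σ x.1) := by
      apply Finset.prod_nbij' (fun x : Fin n × Fin n => (x.2, x.1))
        (fun x : Fin n × Fin n => (x.2, x.1))
      · intro x hx
        obtain ⟨hxo, hxl⟩ := Finset.mem_filter.mp hx
        obtain ⟨-, -, hne⟩ := Finset.mem_offDiag.mp hxo
        exact Finset.mem_filter.mpr ⟨Finset.mem_offDiag.mpr
          ⟨Finset.mem_univ _, Finset.mem_univ _, Ne.symm hne⟩, hxl⟩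
      · intro x hx
        obtain ⟨hxo, hxl⟩ := Finset.mem_filter.mp hx
        obtain ⟨-, -, hne⟩ := Finset.mem_offDiag.mp hxo
        exact Finset.mem_filter.mpr ⟨Finset.mem_offDiag.mpr
          ⟨Finset.mem_univ _, Finset.mem_univ _, Ne.symm hne⟩, hxl⟩
      · intro x _; rfl
      · intro x _; rfl
      · intro x _; rfl
    rw [hswap, prod_filter_lt fun a b => F (σ b) (σ a)]

end CombLayer

section NatLayer

variable {g n : ℕ}

lemma rename_zetaMulNum (σ : Equiv.Perm (Fin n)) (a b : Fin n) :
    MvPolynomial.rename (Sum.map id ⇑σ) (zetaMulNum g n a b) = zetaMulNum g n (σ a) (σ b) := by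
  simp only [zetaMulNum, map_sub, map_mul, map_prod, MvPolynomial.rename_X, Sum.map_inl,
    Sum.map_inr, id_eq]

lemma rename_zetaMulDen (σ : Equiv.Perm (Fin n)) (a b : Fin n) :
    MvPolynomial.rename (Sum.map id ⇑σ) (zetaMulDen g n a b) = zetaMulDen g n (σ a) (σ b) := by
  simp only [zetaMulDen, map_sub, map_mul, map_pow, map_prod, MvPolynomial.rename_X,
    Sum.map_inl, Sum.map_inr, id_eq]

lemma rename_zetaAddNum (σ : Equiv.Perm (Fin n)) (a b : Fin n) :
    MvPolynomial.rename (Sum.map id ⇑σ) (zetaAddNum g n a b) = zetaAddNum g n (σ a) (σ b) := by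
  simp only [zetaAddNum, map_sub, map_mul, map_add, map_prod, MvPolynomial.rename_X,
    Sum.map_inl, Sum.map_inr, id_eq]

lemma rename_XsubX (σ : Equiv.Perm (Fin n)) (a b : Fin n) :
    MvPolynomial.rename (Sum.map id ⇑σ) ((X (Sum.inr a) - X (Sum.inr b) : Pall g n)) =
      X (Sum.inr (σ a)) - X (Sum.inr (σ b)) := by
  simp only [map_sub, MvPolynomial.rename_X, Sum.map_inr]

lemma tauE_coe (σ : Equiv.Perm (Fin n)) :
    ⇑(Equiv.sumCongr (Equiv.refl (Fin (g+1))) σ) = Sum.map id ⇑σ := by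
  funext v
  cases v <;> rfl

end NatLayer

section ConcreteLTS

variable {g n : ℕ}

lemma X_as_monomial (v : Fin (g+1) ⊕ Fin n) :
    (X v : Pall g n) = MvPolynomial.monomial (Finsupp.single v 1) 1 := rfl

lemma XX_as_monomial (v w : Fin (g+1) ⊕ Fin n) :
    (X v * X w : Pall g n) =
      MvPolynomial.monomial (Finsupp.single v 1 + Finsupp.single w 1) 1 := by
  rw [X_as_monomial, X_as_monomial, MvPolynomial.monomial_mul, one_mul]

lemma LTS.congr {A : MvPowerSeries (Fin (g+1) ⊕ Fin n) ℚ} {m m' : ℕ}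
    {p p' : MvPolynomial (Fin (g+1) ⊕ Fin n) ℚ} (h : LTS A m p) (hm : m = m')
    (hp : p = p') : LTS A m' p' := hm ▸ hp ▸ h

lemma LTS_num_factor1 (a b : Fin n) :
    LTS (expSubst g n (X (Sum.inr a) - X (Sum.inl 0) * X (Sum.inr b))) 1
      (X (Sum.inr a) - X (Sum.inr b) - X (Sum.inl 0)) := by
  have heq : (X (Sum.inr a) - X (Sum.inl 0) * X (Sum.inr b) : Pall g n) =
      MvPolynomial.monomial (Finsupp.single (Sum.inr a) 1) 1 -
        MvPolynomial.monomial (Finsupp.single (Sum.inl 0) 1 + Finsupp.single (Sum.inr b) 1) 1 := by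
    rw [XX_as_monomial, X_as_monomial (Sum.inr a)]
  have hne : (Finsupp.single (Sum.inr a : Fin (g+1) ⊕ Fin n) 1) ≠
      Finsupp.single (Sum.inl 0) 1 + Finsupp.single (Sum.inr b) 1 := by
    intro h
    have := DFunLike.congr_fun h (Sum.inl 0)
    simp [Finsupp.single_apply] at this
  have h0 := (LTS_expSubst_binom _ _ hne).congr rfl
    (show _ = (X (Sum.inr a) - X (Sum.inr b) - X (Sum.inl 0) : Pall g n) by
      rw [linPoly_add, linPoly_single, linPoly_single, linPoly_single]; ring)
  rw [← heq] at h0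
  exact h0

lemma LTS_num_factor2 (a b : Fin n) (e : Fin g) :
    LTS (expSubst g n (X (Sum.inr a) * X (Sum.inl e.succ) - X (Sum.inr b))) 1
      (X (Sum.inr a) - X (Sum.inr b) + X (Sum.inl e.succ)) := by
  have heq : (X (Sum.inr a) * X (Sum.inl e.succ) - X (Sum.inr b) : Pall g n) =
      MvPolynomial.monomial (Finsupp.single (Sum.inr a) 1 + Finsupp.single (Sum.inl e.succ) 1) 1 -
        MvPolynomial.monomial (Finsupp.single (Sum.inr b) 1) 1 := by
    rw [XX_as_monomial, X_as_monomial (Sum.inr b)]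
  have hne : (Finsupp.single (Sum.inr a : Fin (g+1) ⊕ Fin n) 1 +
      Finsupp.single (Sum.inl e.succ) 1) ≠ Finsupp.single (Sum.inr b) 1 := by
    intro h
    have := DFunLike.congr_fun h (Sum.inl e.succ)
    simp [Finsupp.single_apply] at this
  have h0 := (LTS_expSubst_binom _ _ hne).congr rfl
    (show _ = (X (Sum.inr a) - X (Sum.inr b) + X (Sum.inl e.succ) : Pall g n) by
      rw [linPoly_add, linPoly_single, linPoly_single, linPoly_single]; ring)
  rw [← heq] at h0
  exact h0

lemma LTS_num_factor3 (a b : Fin n) (e : Fin g) :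
    LTS (expSubst g n (X (Sum.inr a) * X (Sum.inl 0) - X (Sum.inr b) * X (Sum.inl e.succ))) 1
      (X (Sum.inr a) - X (Sum.inr b) + X (Sum.inl 0) - X (Sum.inl e.succ)) := by
  have heq : (X (Sum.inr a) * X (Sum.inl 0) - X (Sum.inr b) * X (Sum.inl e.succ) : Pall g n) =
      MvPolynomial.monomial (Finsupp.single (Sum.inr a) 1 + Finsupp.single (Sum.inl 0) 1) 1 -
        MvPolynomial.monomial (Finsupp.single (Sum.inr b) 1 +
          Finsupp.single (Sum.inl e.succ) 1) 1 := by
    rw [XX_as_monomial, XX_as_monomial]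
  have hne : (Finsupp.single (Sum.inr a : Fin (g+1) ⊕ Fin n) 1 +
      Finsupp.single (Sum.inl 0) 1) ≠
      Finsupp.single (Sum.inr b) 1 + Finsupp.single (Sum.inl e.succ) 1 := by
    intro h
    have := DFunLike.congr_fun h (Sum.inl 0)
    simp only [Finsupp.add_apply, Finsupp.single_apply] at this
    simp [Fin.succ_ne_zero e] at this
  have h0 := (LTS_expSubst_binom _ _ hne).congr rfl
    (show _ = (X (Sum.inr a) - X (Sum.inr b) + X (Sum.inl 0) - X (Sum.inl e.succ) : Pall g n) by
      rw [linPoly_add, linPoly_add, linPoly_single, linPoly_single, linPoly_single,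
        linPoly_single]; ring)
  rw [← heq] at h0
  exact h0

lemma LTS_den_factor (a b : Fin n) (hab : a ≠ b) :
    LTS (expSubst g n (X (Sum.inr a) - X (Sum.inr b))) 1
      (X (Sum.inr a) - X (Sum.inr b)) := by
  have heq : (X (Sum.inr a) - X (Sum.inr b) : Pall g n) =
      MvPolynomial.monomial (Finsupp.single (Sum.inr a) 1) 1 -
        MvPolynomial.monomial (Finsupp.single (Sum.inr b) 1) 1 := by
    rw [X_as_monomial (Sum.inr a), X_as_monomial (Sum.inr b)]
  have hne : (Finsupp.single (Sum.inr a : Fin (g+1) ⊕ Fin n) 1) ≠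
      Finsupp.single (Sum.inr b) 1 := by
    intro h
    have := DFunLike.congr_fun h (Sum.inr a)
    rw [Finsupp.single_eq_same, Finsupp.single_apply,
      if_neg (fun hh : Sum.inr b = Sum.inr a => hab (Sum.inr_injective hh.symm))] at this
    exact one_ne_zero this
  have h0 := (LTS_expSubst_binom _ _ hne).congr rfl
    (show _ = (X (Sum.inr a) - X (Sum.inr b) : Pall g n) by
      rw [linPoly_single, linPoly_single])
  rw [← heq] at h0
  exact h0

lemma LTS_zetaMulNum (a b : Fin n) :
    LTS (expSubst g n (zetaMulNum g n a b)) (2*g+1) (zetaAddNum g n a b) := by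
  rw [zetaMulNum, map_mul, map_prod]
  have hprod := LTS.prod (Finset.univ : Finset (Fin g))
    (fun e => expSubst g n ((X (Sum.inr a) * X (Sum.inl e.succ) - X (Sum.inr b)) *
      (X (Sum.inr a) * X (Sum.inl 0) - X (Sum.inr b) * X (Sum.inl e.succ))))
    (fun _ => 2)
    (fun e => (X (Sum.inr a) - X (Sum.inr b) + X (Sum.inl e.succ)) *
      (X (Sum.inr a) - X (Sum.inr b) + X (Sum.inl 0) - X (Sum.inl e.succ)))
    (fun e _ => by
      rw [map_mul]
      exact (LTS_num_factor2 a b e).mul (LTS_num_factor3 a b e))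
  refine ((LTS_num_factor1 a b).mul hprod).congr ?_ ?_
  · simp only [Finset.sum_const, Finset.card_univ, Fintype.card_fin, smul_eq_mul]
    omega
  · rw [zetaAddNum]

lemma LTS_zetaMulDen (a b : Fin n) (hab : a ≠ b) :
    LTS (expSubst g n (zetaMulDen g n a b)) 1 (X (Sum.inr a) - X (Sum.inr b)) := by
  rw [zetaMulDen, map_mul, map_mul, map_mul]
  have c1 : LTS (expSubst g n (X (Sum.inl (0 : Fin (g+1))) : Pall g n)) 0 1 :=
    LTS_of_constantCoeff (constantCoeff_expSubst_X _)
  have c2 : LTS (expSubst g n (∏ e : Fin g, (X (Sum.inl e.succ) : Pall g n))) 0 1 := by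
    apply LTS_of_constantCoeff
    rw [map_prod, map_prod]
    rw [Finset.prod_congr rfl fun e _ => constantCoeff_expSubst_X (g := g) (n := n) (Sum.inl e.succ)]
    exact Finset.prod_const_one
  have c3 : LTS (expSubst g n ((X (Sum.inr b) : Pall g n) ^ (2*g))) 0 1 := by
    apply LTS_of_constantCoeff
    rw [map_pow, map_pow, constantCoeff_expSubst_X, one_pow]
  exact (((c1.mul c2).mul c3).mul (LTS_den_factor a b hab)).congr rfl (by ring)

end ConcreteLTS

end StmtNine

namespace StmtNine

section Assembly

variable {g n : ℕ}

lemma LTS_unique {τ : Type*} [DecidableEq τ] {A : MvPowerSeries τ ℚ} {m m' : ℕ}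
    {p p' : MvPolynomial τ ℚ} (h1 : LTS A m p) (h2 : LTS A m' p') : p = p' := by
  have hm : m = m' := by rw [← h1.ordOf_eq, h2.ordOf_eq]
  subst hm
  exact MvPolynomial.coe_inj.mp (h1.2.1.symm.trans h2.2.1)

lemma zetaMulDen_ne_zero {a b : Fin n} (hab : a ≠ b) : zetaMulDen g n a b ≠ 0 := by
  rw [zetaMulDen]
  exact mul_ne_zero (mul_ne_zero (mul_ne_zero (MvPolynomial.X_ne_zero _)
    (Finset.prod_ne_zero_iff.mpr fun e _ => MvPolynomial.X_ne_zero _))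
    (pow_ne_zero _ (MvPolynomial.X_ne_zero _))) (XP_sub_XP_ne_zero hab)

lemma permK_zetaMul (σ : Equiv.Perm (Fin n)) (a b : Fin n) :
    permK g n σ (zetaMul g n (vv g n a / vv g n b)) =
      zetaMul g n (vv g n (σ a) / vv g n (σ b)) := by
  simp only [zetaMul, map_mul, map_div₀, map_sub, map_one, map_prod, map_inv₀,
    permK_vv, permK_cK]

lemma permK_zetaAdd (σ : Equiv.Perm (Fin n)) (a b : Fin n) :
    permK g n σ (zetaAdd g n (vv g n a - vv g n b)) =
      zetaAdd g n (vv g n (σ a) - vv g n (σ b)) := by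
  simp only [zetaAdd, map_mul, map_div₀, map_sub, map_add, map_prod, permK_vv, permK_cK]

lemma cancel_helper {K : Type*} [Field K] {L N D D' : K} (hD : D ≠ 0) :
    L * (N / D) * (D * D') = L * N * D' := by
  calc L * (N / D) * (D * D') = L * N * D' * (D / D) := by ring
  _ = L * N * D' := by rw [div_self hD, mul_one]

end Assembly

end StmtNine

open StmtNine
theorem lowest_degree_term_of_shuffle_identity (g n : ℕ) (hg : 1 ≤ g)
    (κt f κlow flow : Pall g n)
    (hmul : liftK g n κt =
      ∑ σ : Equiv.Perm (Fin n), permK g n σ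
        (liftK g n f * ∏ a : Fin n, ∏ b ∈ Finset.Ioi a,
          zetaMul g n (vv g n a / vv g n b)))
    (hκt : κt ≠ 0) (hf : f ≠ 0)
    (hκlow : (κlow : MvPowerSeries (Fin (g+1) ⊕ Fin n) ℚ) = lowTerm (expSubst g n κt))
    (hflow : (flow : MvPowerSeries (Fin (g+1) ⊕ Fin n) ℚ) = lowTerm (expSubst g n f))
    (hnv : (∑ σ : Equiv.Perm (Fin n), permK g n σ
        (liftK g n flow * ∏ a : Fin n, ∏ b ∈ Finset.Ioi a,
          zetaAdd g n (vv g n a - vv g n b))) ≠ 0) :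
    (liftK g n κlow =
      ∑ σ : Equiv.Perm (Fin n), permK g n σ
        (liftK g n flow * ∏ a : Fin n, ∏ b ∈ Finset.Ioi a,
          zetaAdd g n (vv g n a - vv g n b))) ∧
    (∀ a b : Fin n, a ≠ b →
      zetaMul g n (vv g n a / vv g n b) =
        liftK g n (zetaMulNum g n a b) / liftK g n (zetaMulDen g n a b) ∧
      lowTerm (expSubst g n (zetaMulNum g n a b)) =
        ((zetaAddNum g n a b : Pall g n) : MvPowerSeries (Fin (g+1) ⊕ Fin n) ℚ) ∧
      lowTerm (expSubst g n (zetaMulDen g n a b)) =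
        ((X (Sum.inr a) - X (Sum.inr b) : Pall g n) :
          MvPowerSeries (Fin (g+1) ⊕ Fin n) ℚ)) := by
  classical
  -- abbreviations
  set Dsym : Pall g n := ∏ x ∈ Finset.univ.offDiag, zetaMulDen g n x.1 x.2 with hDsym_def
  set Δ : Pall g n := ∏ x ∈ Finset.univ.offDiag,
    (X (Sum.inr x.1) - X (Sum.inr x.2)) with hΔ_def
  set G : Pall g n := f * (∏ a : Fin n, ∏ b ∈ Finset.Ioi a, zetaMulNum g n a b) *
    (∏ a : Fin n, ∏ b ∈ Finset.Ioi a, zetaMulDen g n b a) with hG_def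
  set pG : Pall g n := flow * (∏ a : Fin n, ∏ b ∈ Finset.Ioi a, zetaAddNum g n a b) *
    (∏ a : Fin n, ∏ b ∈ Finset.Ioi a, (X (Sum.inr b) - X (Sum.inr a))) with hpG_def
  have hne_of_Ioi : ∀ {a b : Fin n}, b ∈ Finset.Ioi a → a ≠ b :=
    fun {a b} hb => (Finset.mem_Ioi.mp hb).ne
  have hΔne : Δ ≠ 0 := Finset.prod_ne_zero_iff.mpr fun x hx =>
    XP_sub_XP_ne_zero (Finset.mem_offDiag.mp hx).2.2
  -- Step A : clearing denominators on the additive side, for each permutation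
  have hstepA : ∀ σ : Equiv.Perm (Fin n),
      permK g n σ (liftK g n flow * ∏ a : Fin n, ∏ b ∈ Finset.Ioi a,
        zetaAdd g n (vv g n a - vv g n b)) * liftK g n Δ =
      liftK g n (MvPolynomial.rename (Sum.map id ⇑σ) pG) := by
    intro σ
    have hp1 : permK g n σ (liftK g n flow * ∏ a : Fin n, ∏ b ∈ Finset.Ioi a,
        zetaAdd g n (vv g n a - vv g n b)) =
        liftK g n (MvPolynomial.rename (Sum.map id ⇑σ) flow) *
          ∏ a : Fin n, ∏ b ∈ Finset.Ioi a,
            (liftK g n (zetaAddNum g n (σ a) (σ b)) /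
              liftK g n (X (Sum.inr (σ a)) - X (Sum.inr (σ b)))) := by
      rw [map_mul, permK_liftK, map_prod]
      congr 1
      refine Finset.prod_congr rfl fun a _ => ?_
      rw [map_prod]
      refine Finset.prod_congr rfl fun b _ => ?_
      rw [permK_zetaAdd, zetaAdd_eq_div]
    have hdiv : (∏ a : Fin n, ∏ b ∈ Finset.Ioi a,
        (liftK g n (zetaAddNum g n (σ a) (σ b)) /
          liftK g n (X (Sum.inr (σ a)) - X (Sum.inr (σ b))))) =
        (∏ a : Fin n, ∏ b ∈ Finset.Ioi a, liftK g n (zetaAddNum g n (σ a) (σ b))) /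
          (∏ a : Fin n, ∏ b ∈ Finset.Ioi a,
            liftK g n (X (Sum.inr (σ a)) - X (Sum.inr (σ b)))) := by
      rw [Finset.prod_congr rfl fun a (_ : a ∈ Finset.univ) => Finset.prod_div_distrib _ _,
        Finset.prod_div_distrib]
    have hsplit : liftK g n Δ =
        (∏ a : Fin n, ∏ b ∈ Finset.Ioi a,
          liftK g n (X (Sum.inr (σ a)) - X (Sum.inr (σ b)))) *
        (∏ a : Fin n, ∏ b ∈ Finset.Ioi a,
          liftK g n (X (Sum.inr (σ b)) - X (Sum.inr (σ a)))) := by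
      rw [hΔ_def, map_prod]
      exact prod_offDiag_split σ fun x y => liftK g n (X (Sum.inr x) - X (Sum.inr y))
    have hDne : (∏ a : Fin n, ∏ b ∈ Finset.Ioi a,
        liftK g n (X (Sum.inr (σ a)) - X (Sum.inr (σ b)))) ≠ 0 :=
      Finset.prod_ne_zero_iff.mpr fun a _ => Finset.prod_ne_zero_iff.mpr fun b hb =>
        liftK_ne_zero (XP_sub_XP_ne_zero fun h => (hne_of_Ioi hb) (σ.injective h))
    have hRHS : liftK g n (MvPolynomial.rename (Sum.map id ⇑σ) pG) =
        liftK g n (MvPolynomial.rename (Sum.map id ⇑σ) flow) *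
          (∏ a : Fin n, ∏ b ∈ Finset.Ioi a, liftK g n (zetaAddNum g n (σ a) (σ b))) *
          (∏ a : Fin n, ∏ b ∈ Finset.Ioi a,
            liftK g n (X (Sum.inr (σ b)) - X (Sum.inr (σ a)))) := by
      rw [hpG_def, map_mul, map_mul, map_mul, map_mul]
      congr 2
      · rw [map_prod, map_prod]
        refine Finset.prod_congr rfl fun a _ => ?_
        rw [map_prod, map_prod]
        exact Finset.prod_congr rfl fun b _ => by rw [rename_zetaAddNum]
      · rw [map_prod, map_prod]
        refine Finset.prod_congr rfl fun a _ => ?_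
        rw [map_prod, map_prod]
        exact Finset.prod_congr rfl fun b _ => by rw [rename_XsubX]
    rw [hp1, hdiv, hsplit, hRHS]
    exact cancel_helper hDne
  -- Step B : clearing denominators on the multiplicative side
  have hstepM : ∀ σ : Equiv.Perm (Fin n),
      permK g n σ (liftK g n f * ∏ a : Fin n, ∏ b ∈ Finset.Ioi a,
        zetaMul g n (vv g n a / vv g n b)) * liftK g n Dsym =
      liftK g n (MvPolynomial.rename (Sum.map id ⇑σ) G) := by
    intro σ
    have hp1 : permK g n σ (liftK g n f * ∏ a : Fin n, ∏ b ∈ Finset.Ioi a,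
        zetaMul g n (vv g n a / vv g n b)) =
        liftK g n (MvPolynomial.rename (Sum.map id ⇑σ) f) *
          ∏ a : Fin n, ∏ b ∈ Finset.Ioi a,
            (liftK g n (zetaMulNum g n (σ a) (σ b)) /
              liftK g n (zetaMulDen g n (σ a) (σ b))) := by
      rw [map_mul, permK_liftK, map_prod]
      congr 1
      refine Finset.prod_congr rfl fun a _ => ?_
      rw [map_prod]
      refine Finset.prod_congr rfl fun b hb => ?_
      rw [permK_zetaMul, zetaMul_eq_div (fun h => (hne_of_Ioi hb) (σ.injective h))]
    have hdiv : (∏ a : Fin n, ∏ b ∈ Finset.Ioi a,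
        (liftK g n (zetaMulNum g n (σ a) (σ b)) /
          liftK g n (zetaMulDen g n (σ a) (σ b)))) =
        (∏ a : Fin n, ∏ b ∈ Finset.Ioi a, liftK g n (zetaMulNum g n (σ a) (σ b))) /
          (∏ a : Fin n, ∏ b ∈ Finset.Ioi a, liftK g n (zetaMulDen g n (σ a) (σ b))) := by
      rw [Finset.prod_congr rfl fun a (_ : a ∈ Finset.univ) => Finset.prod_div_distrib _ _,
        Finset.prod_div_distrib]
    have hsplit : liftK g n Dsym =
        (∏ a : Fin n, ∏ b ∈ Finset.Ioi a, liftK g n (zetaMulDen g n (σ a) (σ b))) *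
        (∏ a : Fin n, ∏ b ∈ Finset.Ioi a, liftK g n (zetaMulDen g n (σ b) (σ a))) := by
      rw [hDsym_def, map_prod]
      exact prod_offDiag_split σ fun x y => liftK g n (zetaMulDen g n x y)
    have hDne : (∏ a : Fin n, ∏ b ∈ Finset.Ioi a,
        liftK g n (zetaMulDen g n (σ a) (σ b))) ≠ 0 :=
      Finset.prod_ne_zero_iff.mpr fun a _ => Finset.prod_ne_zero_iff.mpr fun b hb =>
        liftK_ne_zero (zetaMulDen_ne_zero fun h => (hne_of_Ioi hb) (σ.injective h))
    have hRHS : liftK g n (MvPolynomial.rename (Sum.map id ⇑σ) G) =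
        liftK g n (MvPolynomial.rename (Sum.map id ⇑σ) f) *
          (∏ a : Fin n, ∏ b ∈ Finset.Ioi a, liftK g n (zetaMulNum g n (σ a) (σ b))) *
          (∏ a : Fin n, ∏ b ∈ Finset.Ioi a, liftK g n (zetaMulDen g n (σ b) (σ a))) := by
      rw [hG_def, map_mul, map_mul, map_mul, map_mul]
      congr 2
      · rw [map_prod, map_prod]
        refine Finset.prod_congr rfl fun a _ => ?_
        rw [map_prod, map_prod]
        exact Finset.prod_congr rfl fun b _ => by rw [rename_zetaMulNum]
      · rw [map_prod, map_prod]
        refine Finset.prod_congr rfl fun a _ => ?_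
        rw [map_prod, map_prod]
        exact Finset.prod_congr rfl fun b _ => by rw [rename_zetaMulDen]
    rw [hp1, hdiv, hsplit, hRHS]
    exact cancel_helper hDne
  -- Step C : polynomial identity from hmul
  have hE1 : liftK g n (κt * Dsym) =
      liftK g n (∑ σ : Equiv.Perm (Fin n), MvPolynomial.rename (Sum.map id ⇑σ) G) := by
    rw [map_mul, hmul, map_sum, Finset.sum_mul]
    exact Finset.sum_congr rfl fun σ _ => hstepM σ
  have E1 : κt * Dsym = ∑ σ : Equiv.Perm (Fin n), MvPolynomial.rename (Sum.map id ⇑σ) G :=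
    liftK_injective hE1
  -- Step D : nonvanishing of the additive lowest sum
  have hpG_ne : (∑ σ : Equiv.Perm (Fin n), MvPolynomial.rename (Sum.map id ⇑σ) pG) ≠ 0 := by
    intro h0
    have hz : (∑ σ : Equiv.Perm (Fin n), permK g n σ
        (liftK g n flow * ∏ a : Fin n, ∏ b ∈ Finset.Ioi a,
          zetaAdd g n (vv g n a - vv g n b))) * liftK g n Δ = 0 := by
      rw [Finset.sum_mul, Finset.sum_congr rfl fun σ _ => hstepA σ, ← map_sum, h0, map_zero]
    rcases mul_eq_zero.mp hz with h | h
    · exact hnv h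
    · exact liftK_ne_zero hΔne h
  -- Step E : lowest-degree terms
  have hκ : LTS (expSubst g n κt) (ordOf (expSubst g n κt)) κlow :=
    LTS_of_lowTerm (expSubst_ne_zero hκt) hκlow.symm
  have hfL : LTS (expSubst g n f) (ordOf (expSubst g n f)) flow :=
    LTS_of_lowTerm (expSubst_ne_zero hf) hflow.symm
  have hDsymLTS : LTS (expSubst g n Dsym) (∑ _x ∈ (Finset.univ : Finset (Fin n)).offDiag, (1 : ℕ)) Δ := by
    rw [hDsym_def, map_prod, hΔ_def]
    exact LTS.prod _ _ _ _ fun x hx =>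
      LTS_zetaMulDen x.1 x.2 (Finset.mem_offDiag.mp hx).2.2
  have hNumProd : LTS (expSubst g n (∏ a : Fin n, ∏ b ∈ Finset.Ioi a, zetaMulNum g n a b))
      (∑ a : Fin n, ∑ b ∈ Finset.Ioi a, (2*g+1))
      (∏ a : Fin n, ∏ b ∈ Finset.Ioi a, zetaAddNum g n a b) := by
    rw [map_prod]
    refine LTS.prod _ _ _ _ fun a _ => ?_
    rw [map_prod]
    exact LTS.prod _ _ _ _ fun b _ => LTS_zetaMulNum a b
  have hDenProd : LTS (expSubst g n (∏ a : Fin n, ∏ b ∈ Finset.Ioi a, zetaMulDen g n b a))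
      (∑ a : Fin n, ∑ b ∈ Finset.Ioi a, (1 : ℕ))
      (∏ a : Fin n, ∏ b ∈ Finset.Ioi a, (X (Sum.inr b) - X (Sum.inr a))) := by
    rw [map_prod]
    refine LTS.prod _ _ _ _ fun a _ => ?_
    rw [map_prod]
    exact LTS.prod _ _ _ _ fun b hb => LTS_zetaMulDen b a (hne_of_Ioi hb).symm
  have hGL : LTS (expSubst g n G)
      ((ordOf (expSubst g n f) + ∑ a : Fin n, ∑ b ∈ Finset.Ioi a, (2*g+1)) +
        ∑ a : Fin n, ∑ b ∈ Finset.Ioi a, (1 : ℕ)) pG := by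
    rw [hG_def, map_mul, map_mul, hpG_def]
    exact (hfL.mul hNumProd).mul hDenProd
  have hσG : ∀ σ : Equiv.Perm (Fin n),
      LTS (expSubst g n (MvPolynomial.rename (Sum.map id ⇑σ) G))
        ((ordOf (expSubst g n f) + ∑ a : Fin n, ∑ b ∈ Finset.Ioi a, (2*g+1)) +
          ∑ a : Fin n, ∑ b ∈ Finset.Ioi a, (1 : ℕ))
        (MvPolynomial.rename (Sum.map id ⇑σ) pG) := by
    intro σ
    have := hGL.rename_exp (Equiv.sumCongr (Equiv.refl (Fin (g+1))) σ)
    rwa [tauE_coe] at this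
  have hRHS_LTS : LTS (∑ σ : Equiv.Perm (Fin n),
      expSubst g n (MvPolynomial.rename (Sum.map id ⇑σ) G))
      ((ordOf (expSubst g n f) + ∑ a : Fin n, ∑ b ∈ Finset.Ioi a, (2*g+1)) +
        ∑ a : Fin n, ∑ b ∈ Finset.Ioi a, (1 : ℕ))
      (∑ σ : Equiv.Perm (Fin n), MvPolynomial.rename (Sum.map id ⇑σ) pG) :=
    LTS.sum _ _ _ _ (fun σ _ => hσG σ) hpG_ne
  have hLHS_LTS : LTS (expSubst g n κt * expSubst g n Dsym)
      (ordOf (expSubst g n κt) + ∑ _x ∈ (Finset.univ : Finset (Fin n)).offDiag, (1 : ℕ)) (κlow * Δ) :=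
    hκ.mul hDsymLTS
  have hE2 : expSubst g n κt * expSubst g n Dsym =
      ∑ σ : Equiv.Perm (Fin n), expSubst g n (MvPolynomial.rename (Sum.map id ⇑σ) G) := by
    rw [← map_mul, E1, map_sum]
  rw [hE2] at hLHS_LTS
  have hpoly : κlow * Δ = ∑ σ : Equiv.Perm (Fin n), MvPolynomial.rename (Sum.map id ⇑σ) pG :=
    LTS_unique hLHS_LTS hRHS_LTS
  -- Step F : conclusion
  constructor
  · have hfinal : liftK g n κlow * liftK g n Δ =
        (∑ σ : Equiv.Perm (Fin n), permK g n σ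
          (liftK g n flow * ∏ a : Fin n, ∏ b ∈ Finset.Ioi a,
            zetaAdd g n (vv g n a - vv g n b))) * liftK g n Δ := by
      rw [← map_mul, hpoly, map_sum, Finset.sum_mul]
      exact Finset.sum_congr rfl fun σ _ => (hstepA σ).symm
    exact mul_right_cancel₀ (liftK_ne_zero hΔne) hfinal
  · intro a b hab
    exact ⟨zetaMul_eq_div hab, (LTS_zetaMulNum a b).lowTerm_eq,
      (LTS_zetaMulDen a b hab).lowTerm_eq⟩
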